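/- arXiv:0707.0915 — 4 statements merged into one kernel-verified Lean document; each statement's English description precedes it below -/
import Mathlib

section
/- Let k be a field of characteristic p > 2, let 0 ≤ e < p, and let d ≤ (N+1)·(p−1)/2 − e. Then the degree-d graded piece of the colon ideal ((x_0^p,...,x_N^p) : (∑_{i=0}^N x_i^2)^e) in k[x_0,...,x_N] equals the degree-d graded piece of the ideal (x_0^p,...,x_N^p, (∑_{i=0}^N x_i^2)^{p−e}). -/
/-!
Write `Q = ∑ xᵢ²`, `I = (x₀^p, …, x_N^p)` and `Δ = ∑ ∂ᵢ²`. In characteristic `p` every `∂ᵢ`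
kills `xⱼ^p`, so `Δ` preserves `I`; and for `u` homogeneous of degree `c` in `n` variables,
`Δ (Q^(j+1) u) = Q^(j+1) Δu + ν Q^j u` with `ν = 2(j+1)(2(c+j)+n)`. Hence if `Q^(j+1) u ∈ I` and
`ν ≠ 0` in `k`, then `Q^j (ν u + Q Δu) ∈ I`, while `Q^(m+1) Δu ∈ I`; induction on `j` inside a
descending induction on the exponent `m` (which starts at `m = p`, where `I + (Q^0)` is
everything) yields `u ∈ I + (Q^(p-m))`. When `p ∣ ν`, the parity of `p` forces the stronger bound
`2(c+j+1) ≤ (n-1)(p-1)`, and the statement for one variable fewer applies: writing a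
polynomial in `x₀, …, x_n` as a polynomial in `x₀` and using `Q = Q' + x₀²`, its coefficients
are made to lie in `I'` one at a time, lowest first.
-/

open MvPolynomial

theorem two_mul_le_pred_mul_pred_of_prime_dvd {p n c j : ℕ} (hp : p.Prime) (hp2 : p ≠ 2)
    (hj : j + 1 < p) (hb : 2 * (c + j + 1) ≤ n * (p - 1))
    (hdvd : p ∣ 2 * (j + 1) * (2 * (c + j) + n)) : 2 * (c + j + 1) ≤ (n - 1) * (p - 1) := by
  have hdvd' : p ∣ 2 * (c + j) + n := by
    rcases hp.dvd_mul.1 hdvd with h | h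
    · rcases hp.dvd_mul.1 h with h | h
      · exact absurd (Nat.le_of_dvd two_pos h) (by have := hp.two_le; omega)
      · exact absurd (Nat.le_of_dvd j.succ_pos h) (by omega)
    · exact h
  obtain ⟨r, hr⟩ := hdvd'
  have hpn : n * (p - 1) + n = p * n := by
    rw [mul_comm p, ← Nat.mul_add_one, Nat.sub_add_cancel hp.one_le]
  have hrn : r < n := Nat.lt_of_mul_lt_mul_left (a := p) (by omega)
  -- `p` is odd, so `r ≡ p * r = 2 * (c + j) + n ≡ n` modulo 2 and hence `r ≠ n - 1`.
  have hpr : p * r % 2 = r % 2 := by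
    rw [Nat.mul_mod, Nat.odd_iff.1 (hp.odd_of_ne_two hp2), one_mul, Nat.mod_mod]
  have hr2 : p * r + 2 * p ≤ p * n := by
    simpa [mul_add, mul_comm p 2] using Nat.mul_le_mul_left p (show r + 2 ≤ n by omega)
  have hpn' : (n - 1) * (p - 1) + (p - 1) = n * (p - 1) := by
    rw [← Nat.succ_mul, Nat.succ_eq_add_one, Nat.sub_add_cancel (by omega)]
  omega

namespace Polynomial

theorem coeff_mul_sub_coeff_zero_mul_mem {R : Type*} [CommRing R] {J : Ideal R} {P F : R[X]}
    {T : ℕ} (hF : ∀ t < T, F.coeff t ∈ J) :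
    (P * F).coeff T - P.coeff 0 * F.coeff T ∈ J := by
  have h0T : ((0 : ℕ), T) ∈ Finset.HasAntidiagonal.antidiagonal T := by simp
  rw [coeff_mul, ← Finset.add_sum_erase _ _ h0T, add_sub_cancel_left]
  refine Ideal.sum_mem _ fun x hx => Ideal.mul_mem_left _ _ (hF _ ?_)
  obtain ⟨hne, hx⟩ := Finset.mem_erase.1 hx
  rw [Finset.HasAntidiagonal.mem_antidiagonal] at hx
  rcases x with ⟨_ | a, b⟩
  · simp_all
  · simp at hx; omega

end Polynomial

namespace Ideal

variable {A : Type*} [CommRing A] {I : Ideal A} {q : A}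

theorem mul_mem_sup_span_pow_succ {x : A} {r : ℕ} (hx : x ∈ I ⊔ span {q ^ r}) :
    q * x ∈ I ⊔ span {q ^ (r + 1)} := by
  obtain ⟨a, ha, b, hb, rfl⟩ := Submodule.mem_sup.1 hx
  rw [mul_add]
  refine add_mem (mem_sup_left (I.mul_mem_left q ha)) (mem_sup_right ?_)
  rw [mem_span_singleton] at hb
  rw [mem_span_singleton, pow_succ']
  exact mul_dvd_mul_left q hb

theorem mul_mem_of_mem_sup_span {x y : A} (hqy : q * y ∈ I) (hx : x ∈ I ⊔ span {y}) :
    q * x ∈ I := by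
  obtain ⟨a, ha, b, hb, rfl⟩ := Submodule.mem_sup.1 hx
  obtain ⟨c, rfl⟩ := mem_span_singleton'.1 hb
  rw [mul_add, mul_left_comm]
  exact add_mem (I.mul_mem_left q ha) (I.mul_mem_left c hqy)

theorem sup_span_pow_antitone : Antitone fun r : ℕ => I ⊔ span {q ^ r} :=
  fun _ _ h => sup_le_sup_left (span_singleton_le_span_singleton.2 (pow_dvd_pow q h)) I

end Ideal

namespace MvPolynomial

section XPowIdeal

variable (σ R : Type*) [CommSemiring R]

noncomputable def xPowIdeal (p : ℕ) : Ideal (MvPolynomial σ R) :=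
  Ideal.span (Set.range fun i => X i ^ p)

variable {σ R} {p : ℕ}

theorem mem_xPowIdeal_iff {f : MvPolynomial σ R} :
    f ∈ xPowIdeal σ R p ↔ ∀ s ∈ f.support, ∃ i, p ≤ s i := by
  have : (Set.range fun i => (X i : MvPolynomial σ R) ^ p) =
      (fun s => monomial s (1 : R)) '' Set.range fun i => Finsupp.single i p := by
    rw [← Set.range_comp]; simp [Function.comp_def, X_pow_eq_monomial]
  simp [xPowIdeal, this, mem_ideal_span_monomial_image, Finsupp.single_le_iff]

theorem X_pow_mem_xPowIdeal (i : σ) : (X i : MvPolynomial σ R) ^ p ∈ xPowIdeal σ R p :=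
  Ideal.subset_span ⟨i, rfl⟩

theorem mem_xPowIdeal_succ_iff {n : ℕ} {f : MvPolynomial (Fin (n + 1)) R} :
    f ∈ xPowIdeal (Fin (n + 1)) R p ↔
      ∀ t < p, (finSuccEquiv R n f).coeff t ∈ xPowIdeal (Fin n) R p := by
  simp only [mem_xPowIdeal_iff, mem_support_iff, finSuccEquiv_coeff_coeff, Fin.exists_fin_succ]
  constructor
  · intro hf t ht s hs
    simpa [ht.not_ge] using hf _ hs
  · intro hf s hs
    refine or_iff_not_imp_left.2 fun h0 => ?_
    rw [← Finsupp.cons_tail s] at hs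
    simpa [Finsupp.tail_apply] using hf (s 0) (not_le.1 h0) _ hs

end XPowIdeal

section Laplacian

variable {σ R : Type*} [CommRing R]

theorem pderiv_X_pow_of_charP (p : ℕ) [CharP R p] (i j : σ) :
    pderiv i (X j ^ p : MvPolynomial σ R) = 0 := by
  rw [Derivation.leibniz_pow, nsmul_eq_mul, CharP.cast_eq_zero, zero_mul]

theorem pderiv_mem_xPowIdeal {p : ℕ} [CharP R p] {f : MvPolynomial σ R}
    (hf : f ∈ xPowIdeal σ R p) (i : σ) : pderiv i f ∈ xPowIdeal σ R p := by
  induction hf using Submodule.span_induction with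
  | mem x hx =>
    obtain ⟨j, rfl⟩ := hx
    rw [pderiv_X_pow_of_charP]
    exact zero_mem _
  | zero => simp
  | add x y _ _ hx hy => simpa using add_mem hx hy
  | smul a x hx hx' =>
    rw [smul_eq_mul, Derivation.leibniz, smul_eq_mul, smul_eq_mul]
    exact add_mem (Ideal.mul_mem_left _ _ hx') (Ideal.mul_mem_right _ _ hx)

variable (σ R) [Fintype σ]

noncomputable def laplacian : MvPolynomial σ R →ₗ[R] MvPolynomial σ R :=
  ∑ i, (pderiv i).toLinearMap ∘ₗ (pderiv i).toLinearMap

noncomputable def sumSq : MvPolynomial σ R := ∑ i, X i ^ 2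

variable {σ R}

theorem laplacian_apply (f : MvPolynomial σ R) :
    laplacian σ R f = ∑ i, pderiv i (pderiv i f) := by
  simp [laplacian]

theorem laplacian_mem_xPowIdeal {p : ℕ} [CharP R p] {f : MvPolynomial σ R}
    (hf : f ∈ xPowIdeal σ R p) : laplacian σ R f ∈ xPowIdeal σ R p := by
  rw [laplacian_apply]
  exact Ideal.sum_mem _ fun i _ => pderiv_mem_xPowIdeal (pderiv_mem_xPowIdeal hf i) i

theorem isHomogeneous_laplacian {f : MvPolynomial σ R} {c : ℕ} (hf : f.IsHomogeneous c) :
    (laplacian σ R f).IsHomogeneous (c - 2) := by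
  rw [laplacian_apply]
  exact IsHomogeneous.sum _ _ _ fun i _ => by simpa [Nat.sub_sub] using hf.pderiv.pderiv

theorem laplacian_eq_zero_of_isHomogeneous {f : MvPolynomial σ R} {c : ℕ}
    (hf : f.IsHomogeneous c) (hc : c < 2) : laplacian σ R f = 0 := by
  have hzero : ∀ g : MvPolynomial σ R, g.IsHomogeneous 0 → ∀ i, pderiv i g = 0 := by
    intro g hg i
    rw [← totalDegree_zero_iff_isHomogeneous, totalDegree_eq_zero_iff_eq_C] at hg
    rw [hg, pderiv_C]
  rw [laplacian_apply]
  refine Finset.sum_eq_zero fun i _ => ?_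
  interval_cases c
  · rw [hzero f hf, map_zero]
  · exact hzero _ hf.pderiv i

theorem isHomogeneous_sumSq : (sumSq σ R).IsHomogeneous 2 :=
  IsHomogeneous.sum _ _ _ fun i _ => isHomogeneous_X_pow i 2

theorem sumSq_pow_mem_xPowIdeal (p : ℕ) [Fact p.Prime] [CharP R p] :
    sumSq σ R ^ p ∈ xPowIdeal σ R p := by
  rw [sumSq, sum_pow_char]
  refine Ideal.sum_mem _ fun i _ => ?_
  rw [← pow_mul, mul_comm, pow_mul, sq]
  exact Ideal.mul_mem_left _ _ (X_pow_mem_xPowIdeal i)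

theorem pderiv_sumSq (i : σ) : pderiv i (sumSq σ R) = 2 * X i := by
  classical
  simp [sumSq, map_sum, pderiv_X, Pi.single_apply, mul_comm]

theorem isHomogeneous_sumSq_mul_laplacian {u : MvPolynomial σ R} {c : ℕ}
    (hu : u.IsHomogeneous c) :
    (sumSq σ R * laplacian σ R u).IsHomogeneous c := by
  rcases lt_or_ge c 2 with hc | hc
  · rw [laplacian_eq_zero_of_isHomogeneous hu hc, mul_zero]
    exact isHomogeneous_zero _ _ _
  · simpa [Nat.add_sub_cancel' hc] using isHomogeneous_sumSq.mul (isHomogeneous_laplacian hu)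

theorem laplacian_sumSq_mul (f : MvPolynomial σ R) :
    laplacian σ R (sumSq σ R * f) = sumSq σ R * laplacian σ R f
      + 4 * ∑ i, X i * pderiv i f + 2 * Fintype.card σ * f := by
  have hi : ∀ i, pderiv i (pderiv i (sumSq σ R * f)) =
      sumSq σ R * pderiv i (pderiv i f) + 4 * (X i * pderiv i f) + 2 * f := by
    intro i
    have h2 : pderiv i (2 : MvPolynomial σ R) = 0 := by simpa using (pderiv i).map_natCast 2
    simp only [Derivation.leibniz, pderiv_sumSq, smul_eq_mul, map_add, pderiv_X_self, h2]
    ring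
  simp only [laplacian_apply, hi, Finset.sum_add_distrib, ← Finset.mul_sum, Finset.sum_const,
    Finset.card_univ, nsmul_eq_mul]
  ring

theorem laplacian_sumSq_mul_of_isHomogeneous {f : MvPolynomial σ R} {c : ℕ}
    (hf : f.IsHomogeneous c) :
    laplacian σ R (sumSq σ R * f) =
      sumSq σ R * laplacian σ R f
        + ((4 * c + 2 * Fintype.card σ : ℕ) : MvPolynomial σ R) * f := by
  rw [laplacian_sumSq_mul, hf.sum_X_mul_pderiv, nsmul_eq_mul]
  push_cast
  ring

theorem laplacian_sumSq_pow_mul {f : MvPolynomial σ R} {c : ℕ} (hf : f.IsHomogeneous c)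
    (j : ℕ) :
    laplacian σ R (sumSq σ R ^ (j + 1) * f) = sumSq σ R ^ (j + 1) * laplacian σ R f
      + ((2 * (j + 1) * (2 * (c + j) + Fintype.card σ) : ℕ) : MvPolynomial σ R)
        * (sumSq σ R ^ j * f) := by
  induction j generalizing c f with
  | zero =>
    rw [zero_add, pow_one, pow_zero, one_mul, laplacian_sumSq_mul_of_isHomogeneous hf]
    push_cast
    ring
  | succ j ih =>
    rw [show sumSq σ R ^ (j + 2) * f = sumSq σ R ^ (j + 1) * (sumSq σ R * f) by ring,
      ih (isHomogeneous_sumSq.mul hf),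
      laplacian_sumSq_mul_of_isHomogeneous hf]
    push_cast
    ring

end Laplacian

section Homogeneous

variable {σ R : Type*} [CommRing R]

attribute [local instance] MvPolynomial.gradedAlgebra

theorem homogeneousComponent_mul_of_isHomogeneous_left {q g : MvPolynomial σ R} {a : ℕ}
    (hq : q.IsHomogeneous a) (c : ℕ) :
    homogeneousComponent c (q * g) = if a ≤ c then q * homogeneousComponent (c - a) g else 0 := by
  simp only [← decomposition.decompose'_apply]
  exact DirectSum.coe_decompose_mul_of_left_mem (𝒜 := homogeneousSubmodule σ R) c hq

theorem mem_or_exists_isHomogeneous_of_mem_sup_span {I : Ideal (MvPolynomial σ R)}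
    (hI : I.IsHomogeneous (homogeneousSubmodule σ R)) {q h : MvPolynomial σ R} {a c : ℕ}
    (hq : q.IsHomogeneous a) (hh : h.IsHomogeneous c) (hmem : h ∈ I ⊔ Ideal.span {q}) :
    h ∈ I ∨ ∃ γ b, γ.IsHomogeneous b ∧ a + b = c ∧ h - q * γ ∈ I := by
  obtain ⟨x, hx, y, hy, rfl⟩ := Submodule.mem_sup.1 hmem
  obtain ⟨g, rfl⟩ := Ideal.mem_span_singleton'.1 hy
  have hxc := homogeneousComponent_mem_of_mem hI hx c
  rw [← homogeneousComponent_eq_self hh, map_add, mul_comm,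
    homogeneousComponent_mul_of_isHomogeneous_left hq]
  split_ifs with hac
  · exact Or.inr ⟨homogeneousComponent (c - a) g, c - a, homogeneousComponent_isHomogeneous _ _,
      by omega, by simpa using hxc⟩
  · exact Or.inl (by simpa using hxc)

theorem xPowIdeal_isHomogeneous (p : ℕ) :
    (xPowIdeal σ R p).IsHomogeneous (homogeneousSubmodule σ R) :=
  Ideal.homogeneous_span _ _ (by rintro _ ⟨i, rfl⟩; exact ⟨p, isHomogeneous_X_pow i p⟩)

end Homogeneous

section FinSucc

variable {R : Type*} [CommRing R] {n : ℕ}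

theorem finSuccEquiv_sumSq :
    finSuccEquiv R n (sumSq (Fin (n + 1)) R) =
      Polynomial.C (sumSq (Fin n) R) + Polynomial.X ^ 2 := by
  simp [sumSq, Fin.sum_univ_succ, finSuccEquiv_X_zero, finSuccEquiv_X_succ, map_sum, add_comm]

theorem finSuccEquiv_rename_succ (γ : MvPolynomial (Fin n) R) :
    finSuccEquiv R n (rename Fin.succ γ) = Polynomial.C γ := by
  have : (finSuccEquiv R n).toAlgHom.comp (rename Fin.succ) = Polynomial.CAlgHom :=
    algHom_ext fun i => by simp [finSuccEquiv_X_succ]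
  exact DFunLike.congr_fun this γ

theorem le_of_finSuccEquiv_coeff_ne_zero {f : MvPolynomial (Fin (n + 1)) R} {d T : ℕ}
    (hf : f.IsHomogeneous d) (hT : (finSuccEquiv R n f).coeff T ≠ 0) : T ≤ d :=
  calc T ≤ (finSuccEquiv R n f).natDegree := Polynomial.le_natDegree_of_ne_zero hT
    _ = degreeOf 0 f := natDegree_finSuccEquiv f
    _ ≤ f.totalDegree := degreeOf_le_totalDegree f 0
    _ ≤ d := hf.totalDegree_le

end FinSucc

section Colon

variable (R : Type*) [CommRing R] (p : ℕ) (σ : Type*) [Fintype σ]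

/-- The inclusion `(I : Q^m) ⊆ I + (Q^(p-m))`, in the degrees `c` with `2 * (c + m) ≤ B`. -/
def ColonEq (B m : ℕ) : Prop :=
  ∀ c (h : MvPolynomial σ R), h.IsHomogeneous c → 2 * (c + m) ≤ B →
    sumSq σ R ^ m * h ∈ xPowIdeal σ R p →
      h ∈ xPowIdeal σ R p ⊔ Ideal.span {sumSq σ R ^ (p - m)}

def ColonEqBelow (B : ℕ) : Prop := ∀ m ≤ p, ColonEq R p σ B m

variable {R p σ}

theorem colonEqBelow_zero : ColonEqBelow R p σ 0 := by
  intro m _ c h _ hb hmem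
  obtain rfl : m = 0 := by omega
  exact Ideal.mem_sup_left (by simpa using hmem)

theorem ColonEqBelow.exists_coeff_mem_succ [Fact p.Prime] [CharP R p] {n B : ℕ}
    (H : ColonEqBelow R p (Fin n) B) {m d T : ℕ} (hm : m ≤ p) (hb : 2 * (d + m) ≤ B)
    (hT : T < p)
    {h : MvPolynomial (Fin (n + 1)) R} (hh : h.IsHomogeneous d)
    (hmem : sumSq _ R ^ m * h ∈ xPowIdeal _ R p)
    (hcoeff : ∀ t < T, (finSuccEquiv R n h).coeff t ∈ xPowIdeal (Fin n) R p) :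
    ∃ h' : MvPolynomial (Fin (n + 1)) R, h'.IsHomogeneous d ∧
      sumSq _ R ^ m * h' ∈ xPowIdeal _ R p ∧
      (∀ t < T + 1, (finSuccEquiv R n h').coeff t ∈ xPowIdeal (Fin n) R p) ∧
      h - h' ∈ xPowIdeal _ R p ⊔ Ideal.span {sumSq _ R ^ (p - m)} := by
  by_cases hFT : (finSuccEquiv R n h).coeff T ∈ xPowIdeal (Fin n) R p
  · refine ⟨h, hh, hmem, fun t ht => ?_, by simp⟩
    rcases Nat.lt_succ_iff_lt_or_eq.1 ht with ht | rfl
    exacts [hcoeff t ht, hFT]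
  have hTd : T ≤ d := le_of_finSuccEquiv_coeff_ne_zero hh fun h0 => hFT (h0 ▸ zero_mem _)
  have hFThom := hh.finSuccEquiv_coeff_isHomogeneous T (d - T) (by omega)
  have hQFT : sumSq (Fin n) R ^ m * (finSuccEquiv R n h).coeff T ∈ xPowIdeal (Fin n) R p := by
    have h1 := mem_xPowIdeal_succ_iff.1 hmem T hT
    rw [map_mul, map_pow, finSuccEquiv_sumSq] at h1
    have h2 := Polynomial.coeff_mul_sub_coeff_zero_mul_mem
      (P := (Polynomial.C (sumSq (Fin n) R) + Polynomial.X ^ 2) ^ m) hcoeff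
    simpa [Polynomial.coeff_zero_eq_eval_zero] using sub_mem h1 h2
  obtain ⟨γ, b, hγ, hbd, hγmem⟩ := (mem_or_exists_isHomogeneous_of_mem_sup_span
    (xPowIdeal_isHomogeneous p) (isHomogeneous_sumSq.pow (p - m)) hFThom
    (H m hm _ _ hFThom (by omega) hQFT)).resolve_left hFT
  -- Subtracting `g` clears the coefficient of `X 0 ^ T` without touching the lower ones.
  set g := sumSq (Fin (n + 1)) R ^ (p - m) * (rename Fin.succ γ * X 0 ^ T)
  have hφg : finSuccEquiv R n g = (Polynomial.C (sumSq (Fin n) R) + Polynomial.X ^ 2) ^ (p - m)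
      * Polynomial.C γ * Polynomial.X ^ T := by
    simp [g, finSuccEquiv_sumSq, finSuccEquiv_rename_succ, finSuccEquiv_X_zero, mul_assoc]
  refine ⟨h - g, hh.sub ?_, ?_, fun t ht => ?_, ?_⟩
  · convert (isHomogeneous_sumSq.pow (p - m)).mul
      ((hγ.rename_isHomogeneous).mul (isHomogeneous_X_pow (0 : Fin (n + 1)) T)) using 1
    omega
  · rw [mul_sub, show sumSq _ R ^ m * g = sumSq _ R ^ p * (rename Fin.succ γ * X 0 ^ T) by
      rw [← mul_assoc, ← pow_add, Nat.add_sub_cancel' hm]]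
    exact sub_mem hmem (Ideal.mul_mem_right _ _ (sumSq_pow_mem_xPowIdeal p))
  · rw [map_sub, Polynomial.coeff_sub, hφg, Polynomial.coeff_mul_X_pow']
    split_ifs with htT
    · obtain rfl : t = T := by omega
      simpa [Polynomial.coeff_zero_eq_eval_zero] using hγmem
    · simpa using hcoeff t (by omega)
  · rw [sub_sub_cancel]
    exact Ideal.mem_sup_right (Ideal.mem_span_singleton.2 (dvd_mul_right _ _))

theorem ColonEqBelow.finSucc [Fact p.Prime] [CharP R p] {n B : ℕ}
    (H : ColonEqBelow R p (Fin n) B) : ColonEqBelow R p (Fin (n + 1)) B := by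
  intro m hm d h hh hb hmem
  suffices key : ∀ T ≤ p, ∀ h : MvPolynomial (Fin (n + 1)) R, h.IsHomogeneous d →
      sumSq _ R ^ m * h ∈ xPowIdeal _ R p →
      (∀ t < T, (finSuccEquiv R n h).coeff t ∈ xPowIdeal (Fin n) R p) →
      h ∈ xPowIdeal _ R p ⊔ Ideal.span {sumSq _ R ^ (p - m)} from
    key 0 (Nat.zero_le p) h hh hmem fun t ht => absurd ht t.not_lt_zero
  intro T hT
  induction hT using Nat.decreasingInduction with
  | self => exact fun h _ _ hcoeff => Ideal.mem_sup_left (mem_xPowIdeal_succ_iff.2 hcoeff)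
  | of_succ T hT ih =>
    intro h hh hmem hcoeff
    obtain ⟨h', hh', hmem', hcoeff', hsub⟩ := H.exists_coeff_mem_succ hm hb hT hh hmem hcoeff
    simpa using add_mem hsub (ih h' hh' hmem' hcoeff')

theorem sumSq_mul_laplacian_mem [CharP R p] {B m c : ℕ} (hm : m < p) (hb : 2 * (c + m) ≤ B)
    (hnext : ColonEq R p σ B (m + 1)) {u : MvPolynomial σ R} (hu : u.IsHomogeneous c)
    (hmem : sumSq σ R ^ m * u ∈ xPowIdeal σ R p) :
    sumSq σ R * laplacian σ R u ∈ xPowIdeal σ R p ⊔ Ideal.span {sumSq σ R ^ (p - m)} := by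
  rcases lt_or_ge c 2 with hc | hc
  · rw [laplacian_eq_zero_of_isHomogeneous hu hc, mul_zero]
    exact zero_mem _
  have hΔ : sumSq σ R ^ (m + 1) * laplacian σ R u ∈ xPowIdeal σ R p := by
    have hsucc : sumSq σ R ^ (m + 1) * u ∈ xPowIdeal σ R p := by
      rw [pow_succ', mul_assoc]
      exact Ideal.mul_mem_left _ _ hmem
    have := laplacian_mem_xPowIdeal hsucc
    rw [laplacian_sumSq_pow_mul hu] at this
    exact (Ideal.add_mem_iff_left _ (Ideal.mul_mem_left _ _ hmem)).1 this
  have := Ideal.mul_mem_sup_span_pow_succ (q := sumSq σ R)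
    (hnext (c - 2) _ (isHomogeneous_laplacian hu) (by omega) hΔ)
  rwa [show p - (m + 1) + 1 = p - m by omega] at this

variable {k : Type*} [Field k]

theorem mem_sup_of_sumSq_pow_mul_mem [Fact p.Prime] [CharP k p] (hp : p ≠ 2) {m c : ℕ}
    (hm : m < p) (hb : 2 * (c + m) ≤ Fintype.card σ * (p - 1))
    (hlow : ColonEqBelow k p σ ((Fintype.card σ - 1) * (p - 1)))
    (hnext : ColonEq k p σ (Fintype.card σ * (p - 1)) (m + 1)) {j : ℕ} (hj : j ≤ m)
    {u : MvPolynomial σ k} (hu : u.IsHomogeneous c)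
    (hmem : sumSq σ k ^ j * u ∈ xPowIdeal σ k p) :
    u ∈ xPowIdeal σ k p ⊔ Ideal.span {sumSq σ k ^ (p - m)} := by
  induction j generalizing u with
  | zero => exact Ideal.mem_sup_left (by simpa using hmem)
  | succ j ih =>
    set ν := 2 * (j + 1) * (2 * (c + j) + Fintype.card σ)
    by_cases hν : (ν : k) = 0
    · have hbound := two_mul_le_pred_mul_pred_of_prime_dvd Fact.out hp (by omega) (by omega)
        ((CharP.cast_eq_zero_iff k p ν).1 hν)
      exact Ideal.sup_span_pow_antitone (by omega) (hlow (j + 1) (by omega) c u hu (by omega) hmem)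
    have hνu : C (ν : k)⁻¹ * ((ν : MvPolynomial σ k) * u) = u := by
      rw [← map_natCast C, ← mul_assoc, ← map_mul, inv_mul_cancel₀ hν, map_one, one_mul]
    -- `v` lies in the colon ideal of `sumSq ^ j`: apply the Laplacian to `sumSq ^ (j + 1) * u`.
    set v := (ν : MvPolynomial σ k) * u + sumSq σ k * laplacian σ k u
    have hv : v ∈ xPowIdeal σ k p ⊔ Ideal.span {sumSq σ k ^ (p - m)} := by
      have hνhom : ((ν : MvPolynomial σ k) * u).IsHomogeneous c := by
        rw [← map_natCast (C : k →+* MvPolynomial σ k)]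
        exact hu.C_mul _
      refine ih (by omega) (hνhom.add (isHomogeneous_sumSq_mul_laplacian hu)) ?_
      rw [show sumSq σ k ^ j * v = laplacian σ k (sumSq σ k ^ (j + 1) * u) by
        rw [laplacian_sumSq_pow_mul hu]; ring]
      exact laplacian_mem_xPowIdeal hmem
    have hQΔ := sumSq_mul_laplacian_mem hm hb hnext hu <| by
      rw [← Nat.sub_add_cancel hj, pow_add, mul_assoc]
      exact Ideal.mul_mem_left _ _ hmem
    rw [← hνu, show (ν : MvPolynomial σ k) * u = v - sumSq σ k * laplacian σ k u by ring]
    exact Ideal.mul_mem_left _ _ (sub_mem hv hQΔ)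

theorem colonEqBelow_card_of_pred [Fact p.Prime] [CharP k p] (hp : p ≠ 2)
    (hlow : ColonEqBelow k p σ ((Fintype.card σ - 1) * (p - 1))) :
    ColonEqBelow k p σ (Fintype.card σ * (p - 1)) := by
  intro m hm
  induction hm using Nat.decreasingInduction with
  | self => intro c h _ _ _; simp
  | of_succ m hm hnext =>
    exact fun c u hu hb hmem => mem_sup_of_sumSq_pow_mul_mem hp hm hb hlow hnext le_rfl hu hmem

theorem colonEqBelow_fin [Fact p.Prime] [CharP k p] (hp : p ≠ 2) :
    ∀ n, ColonEqBelow k p (Fin n) (n * (p - 1))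
  | 0 => by simpa using colonEqBelow_zero
  | n + 1 => by
    simpa using colonEqBelow_card_of_pred (σ := Fin (n + 1)) hp
      (by simpa using (colonEqBelow_fin hp n).finSucc)

end Colon

end MvPolynomial

/-- Proposition 2.2 of the paper: over a field `k` of characteristic `p > 2`, for
`0 ≤ e < p` and any degree `d ≤ (N+1)(p−1)/2 − e`, the degree-`d` graded piece of the
colon ideal `((x_0^p,…,x_N^p) : (∑ x_i^2)^e)` equals the degree-`d` piece of the ideal
`(x_0^p,…,x_N^p, (∑ x_i^2)^{p−e})`: for homogeneous `h` of degree `d`,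
`(∑ x_i^2)^e · h ∈ (x_0^p,…,x_N^p)` iff `h ∈ (x_0^p,…,x_N^p, (∑ x_i^2)^{p−e})`. -/
theorem degree_piece_of_colon_ideal (k : Type*) [Field k] (p : ℕ) [Fact p.Prime]
    [CharP k p] (hp : 2 < p) (N e d : ℕ) (he : e < p)
    (hd : 2 * (d + e) ≤ (N + 1) * (p - 1))
    (h : MvPolynomial (Fin (N + 1)) k) (hh : h.IsHomogeneous d) :
    (∑ i, X i ^ 2) ^ e * h ∈
        Ideal.span (Set.range fun i : Fin (N + 1) => (X i : MvPolynomial (Fin (N + 1)) k) ^ p) ↔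
      h ∈ Ideal.span
        ((Set.range fun i : Fin (N + 1) => (X i : MvPolynomial (Fin (N + 1)) k) ^ p) ∪
          {(∑ i, X i ^ 2) ^ (p - e)}) := by
  rw [Ideal.span_union]
  refine ⟨colonEqBelow_fin hp.ne' (N + 1) e he.le d h hh hd,
    fun hmem => Ideal.mul_mem_of_mem_sup_span ?_ hmem⟩
  rw [← pow_add, Nat.add_sub_cancel' he.le]
  exact sumSq_pow_mem_xPowIdeal p
end

section
/- With the notation above (q ≥ 1 odd, N = n+1, dim A_i = α_{i,N} + α_{i−1,N} where ((1−t^q)/(1−t))^N = ∑ α_{i,N} t^i), set d_{N,s} = n(q−1)/2 and γ_N(i) = (1/2^N) ∑_{j∈ℤ} (−1)^j dim A_{d_{N,s}+i+jq}. Then the γ_N satisfy the recursion 2·γ_N(i) = ∑_{|j| ≤ (q−1)/2} γ_{N−1}(i+j) (where γ on the right is taken for the ring in one fewer variable). -/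
open Finset PowerSeries

/-- `dim A_i` for `A = k[x_0,…,x_N]/(x_0^2+⋯+x_N^2, x_1^q,…,x_N^q)`, read off from the
Hilbert series `h_A(t) = (1+t)·((1−t^q)/(1−t))^N`, extended by `0` to negative degrees. -/
noncomputable def dimA (q N : ℕ) (i : ℤ) : ℚ :=
  if 0 ≤ i then
    (PowerSeries.coeff (R := ℚ) i.toNat)
      ((1 + PowerSeries.X) * (∑ l ∈ Finset.range q, (PowerSeries.X : PowerSeries ℚ) ^ l) ^ N)
  else 0

/-- `γ_N(i) = (1/2^N) ∑_{j∈ℤ} (−1)^j dim A_{d_{N,s}+i+jq}` where `d_{N,s} = (N−1)(q−1)/2`. -/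
noncomputable def gam (q N : ℕ) (i : ℤ) : ℚ :=
  (1 / 2 ^ N) * ∑ᶠ j : ℤ, (-1 : ℚ) ^ j * dimA q N (((N : ℤ) - 1) * ((q : ℤ) - 1) / 2 + i + j * q)

/-!
Multiplying the Hilbert series by `1 + t + ⋯ + t^(q-1)` adds a variable, so
`dim A_m = ∑_{l<q} dim A'_{m-l}` with `A'` the ring in one fewer variable. Writing `q = 2h + 1`,
the centres satisfy `d_N = d_{N-1} + h`, so reflecting `l ↦ h - l` turns this into a sum over
`|k| ≤ h` of shifts by `k`. The alternating sums over `j ∈ ℤ` are finite sums in disguise (the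
Hilbert series is a polynomial), hence commute with this sum, and `2^N = 2 · 2^(N-1)`.
-/

lemma dimA_succ (q M : ℕ) (m : ℤ) :
    dimA q (M + 1) m = ∑ l ∈ range q, dimA q M (m - l) := by
  rcases lt_or_ge m 0 with hm | hm
  · rw [dimA, if_neg hm.not_ge]
    exact (sum_eq_zero fun l _ => if_neg (by omega)).symm
  obtain ⟨n, rfl⟩ := Int.eq_ofNat_of_zero_le hm
  rw [dimA, if_pos hm, Int.toNat_natCast, pow_succ, ← mul_assoc, mul_sum, map_sum]
  refine sum_congr rfl fun l _ => ?_
  rw [coeff_mul_X_pow', dimA]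
  by_cases hl : l ≤ n
  · rw [if_pos hl, if_pos (by omega)]
    congr 2
    omega
  · rw [if_neg hl, if_neg (by omega)]

lemma dimA_eq_zero_of_lt (q M : ℕ) {m : ℤ} (hm : M * ((q : ℤ) - 1) + 1 < m) :
    dimA q M m = 0 := by
  induction M generalizing m with
  | zero =>
    rw [Nat.cast_zero, zero_mul, zero_add] at hm
    rw [dimA, if_pos (by omega)]
    have h0 : m.toNat ≠ 0 := by omega
    have h1 : m.toNat ≠ 1 := by omega
    simp [coeff_one, coeff_X, h0, h1]
  | succ M ih =>
    rw [dimA_succ]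
    refine sum_eq_zero fun l hl => ih ?_
    have := mem_range.mp hl
    push_cast at hm
    linarith

lemma dimA_hasFiniteSupport (q M : ℕ) : (dimA q M).HasFiniteSupport := by
  refine (Set.finite_Icc 0 (M * ((q : ℤ) - 1) + 1)).subset fun m hm => ?_
  by_contra hout
  rcases not_and_or.mp hout with h0 | h1
  · exact hm (by simp [dimA, not_le.mp h0 |>.not_ge])
  · exact hm (dimA_eq_zero_of_lt q M (not_le.mp h1))

lemma hasFiniteSupport_alternating_dimA (q M : ℕ) (hq : q ≠ 0) (c : ℤ) :
    (fun j : ℤ => (-1 : ℚ) ^ j * dimA q M (c + j * q)).HasFiniteSupport := by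
  refine Function.HasFiniteSupport.mul_right _ ((dimA_hasFiniteSupport q M).comp_of_injective ?_)
  intro a b hab
  simpa [hq] using hab

lemma dimA_succ_eq_sum_Icc (h M : ℕ) (m : ℤ) :
    dimA (2 * h + 1) (M + 1) (m + h) = ∑ k ∈ Icc (-(h : ℤ)) h, dimA (2 * h + 1) M (m + k) := by
  rw [dimA_succ]
  refine sum_nbij' (fun l => h - l) (fun k => (h - k).toNat) ?_ ?_ ?_ ?_ fun l _ => by ring_nf
  all_goals intro l hl; simp only [mem_range, mem_Icc] at hl ⊢; omega

lemma gam_two_mul_add_one (h N : ℕ) (i : ℤ) :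
    gam (2 * h + 1) N i = (1 / 2 ^ N) *
      ∑ᶠ j : ℤ, (-1 : ℚ) ^ j * dimA (2 * h + 1) N ((N - 1) * h + i + j * (2 * h + 1 : ℕ)) := by
  have center : ((N : ℤ) - 1) * (((2 * h + 1 : ℕ) : ℤ) - 1) / 2 = (N - 1) * h := by
    push_cast
    rw [show ((N : ℤ) - 1) * (2 * h + 1 - 1) = 2 * ((N - 1) * h) by ring,
      Int.mul_ediv_cancel_left _ two_ne_zero]
  rw [gam, center]

theorem gam_recursion_general (q : ℕ) (hq : Odd q) (N : ℕ) (hN : 2 ≤ N) (i : ℤ) :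
    2 * gam q N i =
      ∑ j ∈ Finset.Icc (-(((q : ℤ) - 1) / 2)) (((q : ℤ) - 1) / 2), gam q (N - 1) (i + j) := by
  obtain ⟨h, rfl⟩ := hq
  obtain ⟨M, rfl⟩ : ∃ M, N = M + 1 := ⟨N - 1, by omega⟩
  have half : (((2 * h + 1 : ℕ) : ℤ) - 1) / 2 = h := by push_cast; omega
  have step (j : ℤ) :
      dimA (2 * h + 1) (M + 1) ((((M + 1 : ℕ) : ℤ) - 1) * h + i + j * (2 * h + 1 : ℕ)) =
        ∑ k ∈ Icc (-(h : ℤ)) h,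
          dimA (2 * h + 1) M ((M - 1) * h + (i + k) + j * (2 * h + 1 : ℕ)) := by
    rw [show (((M + 1 : ℕ) : ℤ) - 1) * h + i + j * (2 * h + 1 : ℕ) =
      ((M - 1) * h + i + j * (2 * h + 1 : ℕ)) + h by push_cast; ring, dimA_succ_eq_sum_Icc]
    exact sum_congr rfl fun k _ => by ring_nf
  rw [half, Nat.add_sub_cancel, gam_two_mul_add_one]
  simp_rw [step, mul_sum]
  rw [finsum_sum_comm _ _ fun k _ => hasFiniteSupport_alternating_dimA _ M (by omega) _, mul_sum,
    mul_sum, pow_succ]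
  refine sum_congr rfl fun k _ => ?_
  rw [gam_two_mul_add_one]
  ring

/-- The recursion of Lemma 2.8 of the paper:
`2·γ_N(i) = ∑_{|j| ≤ (q−1)/2} γ_{N−1}(i+j)` for odd `q`. -/
theorem gam_recursion (q : ℕ) (hq : Odd q) (hq3 : 3 ≤ q) (N : ℕ) (hN : 2 ≤ N) (i : ℤ) :
    2 * gam q N i =
      ∑ j ∈ Finset.Icc (-(((q : ℤ) - 1) / 2)) (((q : ℤ) - 1) / 2), gam q (N - 1) (i + j) :=
  gam_recursion_general q hq N hN i
end

section
/- Let q ≥ 3 be odd, N ≥ 1, and define γ_N(i) = (1/2^N) ∑_{j∈ℤ} (−1)^j dim A_{d+i+jq} where d = (N−1)(q−1)/2 and dim A_m is the coefficient of t^m in (1+t)((1−t^q)/(1−t))^N. Then γ_N(0) = 0, γ_N(i) > 0 for i = 1, ..., q−1, and γ_N(q−i) = γ_N(i) for i = 1,...,q−1. -/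
open Finset PowerSeries

/-!
Write `q = 2m + 1` and `d = (N - 1)m`. Since `T ^ q ≡ -1` modulo `T ^ q + 1`, the number
`2 ^ N γ_N(j)` is the coefficient of `T ^ (d + j)` in `(1 + T)(1 + T + ⋯ + T ^ (q - 1)) ^ N`
reduced modulo `T ^ q + 1`; as a function of `j` it is therefore antiperiodic with antiperiod `q`.
The Hilbert polynomial is palindromic of degree `2d + q`, which makes this function invariant
under `j ↦ q - j`, and together with antiperiodicity odd: this gives `γ_N(0) = 0` and the symmetry.
Multiplying by `1 + T + ⋯ + T ^ (q - 1)` replaces the value at `j` by the sum over the window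
`[j - m, j + m]`. For `1 ≤ j ≤ m` the part `[-(m - j), m - j]` of the window cancels by oddness
and the rest lies in `[1, q - 1]`, so positivity on `[1, q - 1]` propagates from `γ_1 = 1`.
-/

open LaurentPolynomial

section LaurentCoeff

variable {R : Type*} [Semiring R]

lemma coeff_mul_T (f : R[T;T⁻¹]) (n x : ℤ) : (f * T n).coeff x = f.coeff (x - n) := by
  simp only [T, AddMonoidAlgebra.coeff_mul_single_apply, mul_one, sub_eq_add_neg]

lemma coeff_toLaurent_of_nonneg (p : Polynomial R) {x : ℤ} (hx : 0 ≤ x) :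
    (Polynomial.toLaurent p).coeff x = p.coeff x.toNat := by
  lift x to ℕ using hx
  exact Finsupp.mapDomain_apply Nat.cast_injective _ x

lemma coeff_toLaurent_of_neg (p : Polynomial R) {x : ℤ} (hx : x < 0) :
    (Polynomial.toLaurent p).coeff x = 0 :=
  Finsupp.mapDomain_of_notMem_range _ _ fun ⟨n, hn⟩ => by
    simp only [AddMonoidHom.coe_coe, eq_natCast] at hn
    omega

lemma coeff_sum_range_T (q : ℕ) (y : ℤ) :
    (∑ l ∈ range q, T l : R[T;T⁻¹]).coeff y = if 0 ≤ y ∧ y < q then 1 else 0 := by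
  simp only [AddMonoidAlgebra.coeff_sum, Finsupp.finsetSum_apply, T_apply]
  rcases lt_or_ge y 0 with hy | hy
  · rw [if_neg (by omega)]
    exact Finset.sum_eq_zero fun l _ => if_neg (by omega)
  · lift y to ℕ using hy
    simp

end LaurentCoeff

section Negacyclic

variable {K : Type*} [Field K]

/-- The `x`-th coefficient of `f` reduced modulo `T ^ q + 1`. -/
noncomputable def negacyclicCoeff (q : ℤ) (f : K[T;T⁻¹]) (x : ℤ) : K :=
  ∑ᶠ j : ℤ, (-1 : K) ^ j * f.coeff (x + j * q)

lemma negacyclicCoeff_antiperiodic (q : ℤ) (f : K[T;T⁻¹]) :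
    Function.Antiperiodic (negacyclicCoeff q f) q := by
  intro x
  rw [negacyclicCoeff, negacyclicCoeff, ← finsum_neg_distrib,
    ← finsum_comp_equiv (Equiv.subRight (1 : ℤ))]
  refine finsum_congr fun j => ?_
  rw [Equiv.subRight_apply, zpow_sub_one₀ (by norm_num),
    show x + q + (j - 1) * q = x + j * q by ring]
  simp

lemma coeff_sub_eq_of_invert_mul_T {f : K[T;T⁻¹]} {D : ℤ} (hf : invert f * T D = f) (x : ℤ) :
    f.coeff (D - x) = f.coeff x := by
  conv_rhs => rw [← hf, coeff_mul_T, invert_apply, neg_sub]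

lemma negacyclicCoeff_sub_eq_of_invert_mul_T {f : K[T;T⁻¹]} {D : ℤ} (hf : invert f * T D = f)
    (q x : ℤ) : negacyclicCoeff q f (D - x) = negacyclicCoeff q f x := by
  rw [negacyclicCoeff, negacyclicCoeff, ← finsum_comp_equiv (Equiv.neg ℤ)]
  refine finsum_congr fun j => ?_
  rw [Equiv.neg_apply, zpow_neg, ← inv_zpow, inv_neg_one,
    ← coeff_sub_eq_of_invert_mul_T hf (x + j * q)]
  ring_nf

lemma negacyclicCoeff_mul_T (q : ℤ) (f : K[T;T⁻¹]) (l x : ℤ) :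
    negacyclicCoeff q (f * T l) x = negacyclicCoeff q f (x - l) := by
  refine finsum_congr fun j => ?_
  rw [coeff_mul_T, sub_add_eq_add_sub]

lemma negacyclicCoeff_sum {ι : Type*} {q : ℤ} (hq : q ≠ 0) (s : Finset ι) (g : ι → K[T;T⁻¹])
    (x : ℤ) : negacyclicCoeff q (∑ i ∈ s, g i) x = ∑ i ∈ s, negacyclicCoeff q (g i) x := by
  have hinj : Function.Injective fun j : ℤ => x + j * q :=
    (add_right_injective x).comp (mul_left_injective₀ hq)
  unfold negacyclicCoeff
  rw [← finsum_sum_comm _ _ fun i _ =>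
    ((g i).coeff.hasFiniteSupport.fun_comp_of_injective hinj).fun_mul_right _]
  simp [Finset.mul_sum]

lemma negacyclicCoeff_eq_coeff {q : ℤ} {f : K[T;T⁻¹]}
    (hf : ∀ y, f.coeff y ≠ 0 → 0 ≤ y ∧ y ≤ q) {x : ℤ} (hx0 : 0 < x) (hxq : x < q) :
    negacyclicCoeff q f x = f.coeff x := by
  rw [negacyclicCoeff, finsum_eq_single _ 0 fun j hj => ?_]
  · simp
  · have : f.coeff (x + j * q) = 0 := by
      by_contra h
      obtain ⟨h0, hyq⟩ := hf _ h
      rcases lt_or_gt_of_ne hj with hj | hj <;> nlinarith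
    simp [this]

end Negacyclic

section OddFunctions

variable {M : Type*}

lemma Function.Antiperiodic.odd_of_sub_eq {α : Type*} [AddCommGroup α] [InvolutiveNeg M]
    {φ : α → M} {c : α} (ha : Function.Antiperiodic φ c) (hs : ∀ j, φ (c - j) = φ j) :
    φ.Odd := fun j => by
  rw [← hs j, sub_eq_neg_add, ha, neg_neg]

lemma sum_range_sub_eq_sum_Icc [AddCommMonoid M] (φ : ℤ → M) (c : ℤ) (m : ℕ) :
    ∑ l ∈ range (2 * m + 1), φ (c + m - l) = ∑ k ∈ Icc (c - m) (c + m), φ k := by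
  refine Finset.sum_nbij' (fun l => c + m - l) (fun k => (c + m - k).toNat) ?_ ?_ ?_ ?_ ?_ <;>
    intro x hx <;> simp_all only [Finset.mem_range, Finset.mem_Icc] <;> omega

lemma Function.Odd.sum_Icc_pos [AddCommGroup M] [LinearOrder M] [IsOrderedAddMonoid M]
    {φ : ℤ → M} (hφ : φ.Odd) {m : ℤ} (hpos : ∀ k, 1 ≤ k → k ≤ 2 * m → 0 < φ k)
    {i : ℤ} (hi : 1 ≤ i) (him : i ≤ m) :
    0 < ∑ k ∈ Icc (i - m) (i + m), φ k := by
  have hsplit : Icc (i - m) (i + m) = Icc (-(m - i)) (m - i) ∪ Icc (m - i + 1) (i + m) := by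
    ext k; simp only [Finset.mem_Icc, Finset.mem_union]; omega
  have hsymm : (Icc (-(m - i)) (m - i)).map (Equiv.neg ℤ).toEmbedding = Icc (-(m - i)) (m - i) := by
    ext k; simp only [Finset.mem_map_equiv, Finset.mem_Icc, Equiv.neg_symm, Equiv.neg_apply]; omega
  rw [hsplit, Finset.sum_union (Finset.disjoint_left.2 fun k hk hk' => by
      simp only [Finset.mem_Icc] at hk hk'; omega), hφ.finsetSum_eq_zero hsymm, zero_add]
  refine Finset.sum_pos (fun k hk => ?_) (Finset.nonempty_Icc.2 (by omega))
  have := Finset.mem_Icc.1 hk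
  exact hpos k (by omega) (by omega)

end OddFunctions

noncomputable def hilbertLaurent (q N : ℕ) : ℚ[T;T⁻¹] := (1 + T 1) * (∑ l ∈ range q, T l) ^ N

lemma dimA_eq_coeff_hilbertLaurent (q N : ℕ) (x : ℤ) :
    dimA q N x = (hilbertLaurent q N).coeff x := by
  have : hilbertLaurent q N =
      Polynomial.toLaurent ((1 + Polynomial.X) * (∑ l ∈ range q, Polynomial.X ^ l) ^ N) := by
    simp [hilbertLaurent, Polynomial.toLaurent_X_pow]
  rw [dimA, this]
  split_ifs with hx
  · rw [coeff_toLaurent_of_nonneg _ hx, ← Polynomial.coeff_coe,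
      ← Polynomial.coeToPowerSeries.ringHom_apply]
    simp only [map_mul, map_pow, map_add, map_one, map_sum,
      Polynomial.coeToPowerSeries.ringHom_apply, Polynomial.coe_X]
  · exact (coeff_toLaurent_of_neg _ (not_le.1 hx)).symm

lemma invert_hilbertLaurent_mul_T (q N : ℕ) :
    invert (hilbertLaurent q N) * T (1 + N * ((q : ℤ) - 1)) = hilbertLaurent q N := by
  have hlin : invert (1 + T 1 : ℚ[T;T⁻¹]) * T 1 = 1 + T 1 := by
    rw [map_add, map_one, invert_T, add_mul, one_mul, ← T_add, neg_add_cancel, T_zero, add_comm]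
  have hsum : invert (∑ l ∈ range q, T l : ℚ[T;T⁻¹]) * T ((q : ℤ) - 1) = ∑ l ∈ range q, T l := by
    rw [map_sum, Finset.sum_mul, ← Finset.sum_range_reflect]
    refine Finset.sum_congr rfl fun l hl => ?_
    rw [invert_T, ← T_add]
    congr 1
    have := Finset.mem_range.1 hl
    omega
  calc invert (hilbertLaurent q N) * T (1 + N * ((q : ℤ) - 1))
      = (invert (1 + T 1) * T 1) * (invert (∑ l ∈ range q, T l) * T ((q : ℤ) - 1)) ^ N := by
        rw [hilbertLaurent, map_mul, map_pow, T_add, ← T_pow]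
        ring
    _ = hilbertLaurent q N := by rw [hlin, hsum, hilbertLaurent]

lemma hilbertLaurent_succ (q N : ℕ) :
    hilbertLaurent q (N + 1) = ∑ l ∈ range q, hilbertLaurent q N * T l := by
  rw [hilbertLaurent, hilbertLaurent, pow_succ, ← mul_assoc, Finset.mul_sum]

lemma coeff_hilbertLaurent_one (q : ℕ) (y : ℤ) :
    (hilbertLaurent q 1).coeff y =
      (if 0 ≤ y ∧ y < q then 1 else 0) + (if 0 ≤ y - 1 ∧ y - 1 < q then 1 else 0) := by
  rw [hilbertLaurent, pow_one, add_mul, one_mul, T_mul, AddMonoidAlgebra.coeff_add,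
    Finsupp.add_apply, coeff_mul_T, coeff_sum_range_T, coeff_sum_range_T]

noncomputable def scaledGam (m N : ℕ) (j : ℤ) : ℚ :=
  negacyclicCoeff (2 * m + 1) (hilbertLaurent (2 * m + 1) N) ((N - 1) * m + j)

lemma gam_eq_scaledGam_div (m N : ℕ) (i : ℤ) : gam (2 * m + 1) N i = scaledGam m N i / 2 ^ N := by
  have hcentre : ((N : ℤ) - 1) * (((2 * m + 1 : ℕ) : ℤ) - 1) / 2 = (N - 1) * m := by
    rw [show ((N : ℤ) - 1) * (((2 * m + 1 : ℕ) : ℤ) - 1) = 2 * ((N - 1) * m) by push_cast; ring]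
    exact Int.mul_ediv_cancel_left _ two_ne_zero
  simp only [gam, scaledGam, negacyclicCoeff, hcentre, dimA_eq_coeff_hilbertLaurent]
  push_cast
  ring

lemma scaledGam_antiperiodic (m N : ℕ) : Function.Antiperiodic (scaledGam m N) (2 * m + 1) :=
  fun j => by rw [scaledGam, ← add_assoc, negacyclicCoeff_antiperiodic]; rfl

lemma scaledGam_sub (m N : ℕ) (j : ℤ) : scaledGam m N (2 * m + 1 - j) = scaledGam m N j := by
  have h := negacyclicCoeff_sub_eq_of_invert_mul_T (invert_hilbertLaurent_mul_T (2 * m + 1) N)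
    (2 * m + 1) ((N - 1) * m + j)
  rw [scaledGam, scaledGam, ← h]
  congr 1
  push_cast
  ring

lemma scaledGam_odd (m N : ℕ) : (scaledGam m N).Odd :=
  (scaledGam_antiperiodic m N).odd_of_sub_eq (scaledGam_sub m N)

lemma scaledGam_succ (m N : ℕ) (i : ℤ) :
    scaledGam m (N + 1) i = ∑ k ∈ Icc (i - m) (i + m), scaledGam m N k := by
  rw [← sum_range_sub_eq_sum_Icc, scaledGam, hilbertLaurent_succ,
    negacyclicCoeff_sum (by omega)]
  refine Finset.sum_congr rfl fun l _ => ?_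
  rw [negacyclicCoeff_mul_T, scaledGam]
  congr 1
  push_cast
  ring

lemma scaledGam_one {m : ℕ} {i : ℤ} (hi : 1 ≤ i) (him : i ≤ 2 * m) : scaledGam m 1 i = 2 := by
  rw [scaledGam, Nat.cast_one, sub_self, zero_mul, zero_add,
    negacyclicCoeff_eq_coeff (fun y hy => ?_) (by omega) (by omega), coeff_hilbertLaurent_one]
  · push_cast
    rw [if_pos (by omega), if_pos (by omega)]
    norm_num
  · by_contra hout
    rw [coeff_hilbertLaurent_one, if_neg (by omega), if_neg (by omega), add_zero] at hy
    exact hy rfl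

lemma scaledGam_pos {m : ℕ} (N : ℕ) {i : ℤ} (hi : 1 ≤ i) (him : i ≤ 2 * m) :
    0 < scaledGam m (N + 1) i := by
  induction N generalizing i with
  | zero => rw [scaledGam_one hi him]; norm_num
  | succ N ih =>
    have hlow : ∀ j : ℤ, 1 ≤ j → j ≤ m → 0 < scaledGam m (N + 1 + 1) j := fun j hj hjm => by
      rw [scaledGam_succ]
      exact (scaledGam_odd m (N + 1)).sum_Icc_pos (fun _ => ih) hj hjm
    rcases le_or_gt i m with h | h
    · exact hlow i hi h
    · rw [← scaledGam_sub]
      exact hlow _ (by omega) (by omega)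

theorem gam_zero_pos_symm_general (q : ℕ) (hq : Odd q) (N : ℕ) (hN : 1 ≤ N) :
    gam q N 0 = 0 ∧
      (∀ i : ℕ, 1 ≤ i → i ≤ q - 1 → 0 < gam q N i) ∧
      (∀ i : ℕ, 1 ≤ i → i ≤ q - 1 → gam q N ((q : ℤ) - i) = gam q N i) := by
  obtain ⟨m, rfl⟩ := hq
  refine ⟨?_, fun i hi him => ?_, fun i _ _ => ?_⟩
  · rw [gam_eq_scaledGam_div, (scaledGam_odd m N).map_zero, zero_div]
  · obtain ⟨N, rfl⟩ := Nat.exists_eq_add_of_le' hN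
    rw [gam_eq_scaledGam_div]
    exact div_pos (scaledGam_pos N (by omega) (by omega)) (by positivity)
  · rw [gam_eq_scaledGam_div, gam_eq_scaledGam_div, Nat.cast_add_one, Nat.cast_mul, Nat.cast_two,
      scaledGam_sub]

/-- Lemma 2.8 of the paper: for odd `q ≥ 3` and `N ≥ 1`, one has `γ_N(0) = 0`,
`γ_N(i) > 0` for `i = 1,…,q−1`, and `γ_N(q−i) = γ_N(i)` for `i = 1,…,q−1`. -/
theorem gam_zero_pos_symm (q : ℕ) (hq : Odd q) (hq3 : 3 ≤ q) (N : ℕ) (hN : 1 ≤ N) :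
    gam q N 0 = 0 ∧
      (∀ i : ℕ, 1 ≤ i → i ≤ q - 1 → 0 < gam q N i) ∧
      (∀ i : ℕ, 1 ≤ i → i ≤ q - 1 → gam q N ((q : ℤ) - i) = gam q N i) :=
  gam_zero_pos_symm_general q hq N hN
end

section
/- Define integer sequences by w_0 = 1 and w_{k+1} = ∑_{j=0}^{k} (−1)^j w_{k−j} C((q+1)/2 + j, 2j+2), and set F_k(i) = ∑_{j=0}^{k} (−1)^j w_{k−j} C(i+j, 2j+1). Similarly u_0 = 0, u_{k+1} = (−1)^k C((q+1)/2 + k, 2k+1) + ∑_{j=0}^{k} (−1)^j u_{k−j} C((q+1)/2 + j, 2j+2), and G_k(i) = (−1)^k C(i+k, 2k) + ∑_{j=0}^{k} (−1)^j u_{k−j} C(i+j, 2j+1). Then for odd q ≥ 3 and for i = 1,...,(q−1)/2: γ_N(i) = F_k(i) if N = 2k+2, and γ_N(i) = G_k(i) if N = 2k+1, where γ_N is defined by γ_1(i) = 1 for 1 ≤ i ≤ q−1, γ_N(0) = 0, γ_N(q−i) = γ_N(i), and γ_N(i) = ∑_{j=1}^{i} γ_{N−1}((q+1)/2 − j) for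 1 ≤ i ≤ (q−1)/2. -/
open Finset

/-- `w_0 = 1`, `w_{k+1} = ∑_{j=0}^{k} (−1)^j w_{k−j} C((q+1)/2 + j, 2j+2)`. -/
def wSeq (q : ℕ) : ℕ → ℤ
  | 0 => 1
  | k + 1 => ∑ j ∈ Finset.range (k + 1),
      (-1 : ℤ) ^ j * wSeq q (k - j) * (((q + 1) / 2 + j).choose (2 * j + 2) : ℤ)
decreasing_by exact Nat.lt_succ_of_le (Nat.sub_le k j)

/-- `u_0 = 0`, `u_{k+1} = (−1)^k C((q+1)/2 + k, 2k+1) + ∑_{j=0}^{k} (−1)^j u_{k−j} C((q+1)/2 + j, 2j+2)`. -/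
def uSeq (q : ℕ) : ℕ → ℤ
  | 0 => 0
  | k + 1 => (-1 : ℤ) ^ k * (((q + 1) / 2 + k).choose (2 * k + 1) : ℤ) +
      ∑ j ∈ Finset.range (k + 1),
        (-1 : ℤ) ^ j * uSeq q (k - j) * (((q + 1) / 2 + j).choose (2 * j + 2) : ℤ)
decreasing_by exact Nat.lt_succ_of_le (Nat.sub_le k j)

/-- `F_k(i) = ∑_{j=0}^{k} (−1)^j w_{k−j} C(i+j, 2j+1)`. -/
noncomputable def Fcl (q k i : ℕ) : ℚ :=
  ∑ j ∈ Finset.range (k + 1), (-1 : ℚ) ^ j * (wSeq q (k - j) : ℚ) * ((i + j).choose (2 * j + 1) : ℚ)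

/-- `G_k(i) = (−1)^k C(i+k, 2k) + ∑_{j=0}^{k} (−1)^j u_{k−j} C(i+j, 2j+1)`. -/
noncomputable def Gcl (q k i : ℕ) : ℚ :=
  (-1 : ℚ) ^ k * ((i + k).choose (2 * k) : ℚ) +
    ∑ j ∈ Finset.range (k + 1), (-1 : ℚ) ^ j * (uSeq q (k - j) : ℚ) * ((i + j).choose (2 * j + 1) : ℚ)

/-!
Write `m = (q + 1) / 2` and `T g i = ∑_{j=1}^{i} g (m - j)`, so that `γ_{N+1} = T γ_N` on
`[1, m)`. Since `T g` only reads `g` on `[1, m)`, it suffices to know `G_0 = 1`, `F_0 = T G_0` and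
`F_{k+1} = T² F_k`, `G_{k+1} = T² G_k` there. Now `T² g` vanishes at `0` and has forward difference
`i ↦ ∑_{t=i+1}^{m-1} g t`; by Pascal's rule and the hockey-stick identity `F_{k+1}` and `G_{k+1}`
have the same forward differences, the recursions for `w_{k+1}` and `u_{k+1}` being exactly what
cancels the constant terms.
-/
lemma sum_Ico_choose_add {i n : ℕ} (a b : ℕ) (h : i ≤ n) :
    ∑ t ∈ Ico i n, ((t + a).choose b : ℚ) =
      ((n + a).choose (b + 1) : ℚ) - ((i + a).choose (b + 1) : ℚ) := by
  induction n, h using Nat.le_induction with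
  | base => simp
  | succ n _ ih =>
    rw [sum_Ico_succ_top (by omega), ih, show n + 1 + a = n + a + 1 by omega,
      Nat.choose_succ_succ]
    push_cast
    ring

lemma eq_of_sub_eq_sub {G : Type*} [AddCommGroup G] {f g : ℕ → G} {n : ℕ} (h₀ : f 0 = g 0)
    (hd : ∀ i < n, f (i + 1) - f i = g (i + 1) - g i) {i : ℕ} (hi : i ≤ n) : f i = g i := by
  have hf := sum_range_sub f i
  have hg := sum_range_sub g i
  rw [sum_congr rfl fun s hs => hd s (by rw [mem_range] at hs; omega), hg] at hf
  rw [← sub_add_cancel (f i) (f 0), ← hf, h₀, sub_add_cancel]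

/-- The recursion for `γ` reads `γ N = tailSum ((q + 1) / 2) (γ (N - 1))` on `[1, (q + 1) / 2)`. -/
def tailSum (m : ℕ) (g : ℕ → ℚ) (i : ℕ) : ℚ :=
  ∑ j ∈ Icc 1 i, g (m - j)

section tailSum

variable {m : ℕ} {g : ℕ → ℚ}

lemma tailSum_eq_sum_Ico {i : ℕ} (hi : i ≤ m) : tailSum m g i = ∑ t ∈ Ico (m - i) m, g t := by
  induction i with
  | zero => simp [tailSum]
  | succ i ih =>
    rw [tailSum, sum_Icc_succ_top (by omega), ← tailSum, ih (by omega),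
      sum_eq_sum_Ico_succ_bot (by omega : m - (i + 1) < m), show m - (i + 1) + 1 = m - i by omega,
      add_comm]

lemma tailSum_tailSum_succ_sub {i : ℕ} (hi : i < m) :
    tailSum m (tailSum m g) (i + 1) - tailSum m (tailSum m g) i = ∑ t ∈ Ico (i + 1) m, g t := by
  rw [tailSum, sum_Icc_succ_top (by omega), ← tailSum, add_sub_cancel_left,
    tailSum_eq_sum_Ico (by omega), show m - (m - (i + 1)) = i + 1 by omega]

lemma tailSum_congr {g' : ℕ → ℚ} (h : Set.EqOn g g' (Set.Ico 1 m)) :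
    Set.EqOn (tailSum m g) (tailSum m g') (Set.Ico 1 m) := fun i ⟨_, hi⟩ =>
  sum_congr rfl fun j hj => by
    rw [mem_Icc] at hj
    exact h ⟨by omega, by omega⟩

lemma tailSum_zero_right (g : ℕ → ℚ) : tailSum m g 0 = 0 := by
  simp [tailSum]

end tailSum

/-- `Fcl` and the sums in the recursions of `wSeq` and `uSeq` are the cases `d = 1` and `d = 2`. -/
def chooseConv (c : ℕ → ℚ) (k d i : ℕ) : ℚ :=
  ∑ j ∈ range (k + 1), (-1 : ℚ) ^ j * c (k - j) * ((i + j).choose (2 * j + d) : ℚ)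

section chooseConv

variable (c : ℕ → ℚ) (k : ℕ)

lemma chooseConv_succ_sub (d i : ℕ) :
    chooseConv c k (d + 1) (i + 1) - chooseConv c k (d + 1) i = chooseConv c k d i := by
  simp only [chooseConv, ← sum_sub_distrib, ← mul_sub]
  refine sum_congr rfl fun j _ => ?_
  rw [show i + 1 + j = i + j + 1 by omega, ← add_assoc, Nat.choose_succ_succ', Nat.cast_add,
    add_sub_cancel_right]

lemma sum_Ico_chooseConv (d : ℕ) {i n : ℕ} (h : i ≤ n) :
    ∑ t ∈ Ico i n, chooseConv c k d t = chooseConv c k (d + 1) n - chooseConv c k (d + 1) i := by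
  simp only [chooseConv, sum_comm (s := Ico i n), ← mul_sum, ← sum_sub_distrib, ← mul_sub]
  exact sum_congr rfl fun j _ => by rw [sum_Ico_choose_add j _ h, add_assoc]

lemma chooseConv_succ_zero (i : ℕ) :
    chooseConv c (k + 1) 0 i = c (k + 1) - chooseConv c k 2 (i + 1) := by
  rw [chooseConv, sum_range_succ', chooseConv, sub_eq_neg_add, ← sum_neg_distrib]
  congr 1
  · refine sum_congr rfl fun j _ => ?_
    rw [Nat.add_sub_add_right, show i + (j + 1) = i + 1 + j by omega,
      show 2 * (j + 1) + 0 = 2 * j + 2 by omega, pow_succ]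
    ring
  · simp

lemma chooseConv_zero_right (d : ℕ) : chooseConv c k (d + 1) 0 = 0 :=
  sum_eq_zero fun j _ => by rw [zero_add, Nat.choose_eq_zero_of_lt (by omega)]; simp

end chooseConv

section closedForms

variable (q k : ℕ)

lemma Fcl_eq_chooseConv : Fcl q k = chooseConv (fun n => (wSeq q n : ℚ)) k 1 := rfl

lemma Gcl_eq_add_chooseConv (i : ℕ) :
    Gcl q k i = (-1 : ℚ) ^ k * ((i + k).choose (2 * k) : ℚ) +
      chooseConv (fun n => (uSeq q n : ℚ)) k 1 i := rfl

lemma wSeq_succ_eq_chooseConv :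
    (wSeq q (k + 1) : ℚ) = chooseConv (fun n => (wSeq q n : ℚ)) k 2 ((q + 1) / 2) := by
  rw [wSeq]
  push_cast
  rfl

lemma uSeq_succ_eq_add_chooseConv :
    (uSeq q (k + 1) : ℚ) = (-1 : ℚ) ^ k * (((q + 1) / 2 + k).choose (2 * k + 1) : ℚ) +
      chooseConv (fun n => (uSeq q n : ℚ)) k 2 ((q + 1) / 2) := by
  rw [uSeq]
  push_cast
  rfl

lemma Fcl_succ_sub {i : ℕ} (hi : i < (q + 1) / 2) :
    Fcl q (k + 1) (i + 1) - Fcl q (k + 1) i = ∑ t ∈ Ico (i + 1) ((q + 1) / 2), Fcl q k t := by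
  rw [Fcl_eq_chooseConv, Fcl_eq_chooseConv, chooseConv_succ_sub, chooseConv_succ_zero,
    sum_Ico_chooseConv _ _ _ hi, ← wSeq_succ_eq_chooseConv]

lemma Gcl_succ_sub {i : ℕ} (hi : i < (q + 1) / 2) :
    Gcl q (k + 1) (i + 1) - Gcl q (k + 1) i = ∑ t ∈ Ico (i + 1) ((q + 1) / 2), Gcl q k t := by
  have hpascal : ((i + 1 + (k + 1)).choose (2 * (k + 1)) : ℚ) =
      ((i + 1 + k).choose (2 * k + 1) : ℚ) + ((i + (k + 1)).choose (2 * (k + 1)) : ℚ) := by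
    rw [show i + 1 + (k + 1) = i + (k + 1) + 1 by omega, show 2 * (k + 1) = 2 * k + 1 + 1 by omega,
      Nat.choose_succ_succ', Nat.cast_add, show i + (k + 1) = i + 1 + k by omega]
  simp only [Gcl_eq_add_chooseConv, sum_add_distrib, ← mul_sum]
  rw [add_sub_add_comm, chooseConv_succ_sub, chooseConv_succ_zero,
    sum_Ico_chooseConv _ _ _ (Nat.succ_le_of_lt hi), uSeq_succ_eq_add_chooseConv,
    sum_Ico_choose_add _ _ (Nat.succ_le_of_lt hi), hpascal, pow_succ]
  ring

lemma Fcl_zero_right : Fcl q k 0 = 0 := by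
  rw [Fcl_eq_chooseConv, chooseConv_zero_right]

lemma Gcl_succ_zero_right : Gcl q (k + 1) 0 = 0 := by
  rw [Gcl_eq_add_chooseConv, chooseConv_zero_right, Nat.choose_eq_zero_of_lt (by omega)]
  simp

lemma Fcl_succ_eqOn :
    Set.EqOn (Fcl q (k + 1)) (tailSum ((q + 1) / 2) (tailSum ((q + 1) / 2) (Fcl q k)))
      (Set.Ico 1 ((q + 1) / 2)) := fun _ hi =>
  eq_of_sub_eq_sub (by rw [Fcl_zero_right, tailSum_zero_right])
    (fun _ hj => by rw [Fcl_succ_sub q k hj, tailSum_tailSum_succ_sub hj]) hi.2.le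

lemma Gcl_succ_eqOn :
    Set.EqOn (Gcl q (k + 1)) (tailSum ((q + 1) / 2) (tailSum ((q + 1) / 2) (Gcl q k)))
      (Set.Ico 1 ((q + 1) / 2)) := fun _ hi =>
  eq_of_sub_eq_sub (by rw [Gcl_succ_zero_right, tailSum_zero_right])
    (fun _ hj => by rw [Gcl_succ_sub q k hj, tailSum_tailSum_succ_sub hj]) hi.2.le

lemma Gcl_zero_left (i : ℕ) : Gcl q 0 i = 1 := by
  simp [Gcl, uSeq]

lemma Fcl_zero_eq_tailSum_Gcl_zero : Fcl q 0 = tailSum ((q + 1) / 2) (Gcl q 0) := by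
  funext i
  simp [Fcl, Gcl, tailSum, wSeq, uSeq]

end closedForms

theorem gam_closed_form_general (q : ℕ) (γ : ℕ → ℕ → ℚ)
    (hbase1 : ∀ i : ℕ, 1 ≤ i → i ≤ q - 1 → γ 1 i = 1)
    (hrec : ∀ N : ℕ, 2 ≤ N → ∀ i : ℕ, 1 ≤ i → 2 * i ≤ q - 1 →
      γ N i = ∑ j ∈ Finset.Icc 1 i, γ (N - 1) ((q + 1) / 2 - j)) :
    ∀ N k i : ℕ, 1 ≤ i → 2 * i ≤ q - 1 →
      (N = 2 * k + 2 → γ N i = Fcl q k i) ∧ (N = 2 * k + 1 → γ N i = Gcl q k i) := by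
  set m := (q + 1) / 2
  have hstep (N : ℕ) (g : ℕ → ℚ) (hg : Set.EqOn (γ (N + 1)) g (Set.Ico 1 m)) :
      Set.EqOn (γ (N + 2)) (tailSum m g) (Set.Ico 1 m) := fun i hi => by
    rw [hrec (N + 2) (by omega) i hi.1 (by have := hi.2; omega)]
    exact tailSum_congr hg hi
  have hγ (k : ℕ) : Set.EqOn (γ (2 * k + 1)) (Gcl q k) (Set.Ico 1 m) ∧
      Set.EqOn (γ (2 * k + 2)) (Fcl q k) (Set.Ico 1 m) := by
    induction k with
    | zero =>
      have hG : Set.EqOn (γ 1) (Gcl q 0) (Set.Ico 1 m) := fun i hi => by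
        rw [hbase1 i hi.1 (by have := hi.2; omega), Gcl_zero_left]
      exact ⟨hG, Fcl_zero_eq_tailSum_Gcl_zero q ▸ hstep 0 _ hG⟩
    | succ k ih =>
      exact ⟨(hstep _ _ (hstep _ _ ih.1)).trans (Gcl_succ_eqOn q k).symm,
        (hstep _ _ (hstep _ _ ih.2)).trans (Fcl_succ_eqOn q k).symm⟩
  intro N k i hi₁ hi₂
  have hi : i ∈ Set.Ico 1 m := ⟨hi₁, by omega⟩
  exact ⟨fun hN => hN ▸ (hγ k).2 hi, fun hN => hN ▸ (hγ k).1 hi⟩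

/-- The closed-form part of Lemma 2.8 of the paper: if `γ_N` is defined by `γ_1(i) = 1` for
`1 ≤ i ≤ q−1`, `γ_N(0) = 0`, `γ_N(q−i) = γ_N(i)` and
`γ_N(i) = ∑_{j=1}^{i} γ_{N−1}((q+1)/2 − j)` for `1 ≤ i ≤ (q−1)/2`, then for odd `q ≥ 3` and
`i = 1,…,(q−1)/2`: `γ_N(i) = F_k(i)` if `N = 2k+2`, and `γ_N(i) = G_k(i)` if `N = 2k+1`. -/
theorem gam_closed_form (q : ℕ) (hq : Odd q) (hq3 : 3 ≤ q) (γ : ℕ → ℕ → ℚ)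
    (hbase1 : ∀ i : ℕ, 1 ≤ i → i ≤ q - 1 → γ 1 i = 1)
    (hzero : ∀ N : ℕ, 1 ≤ N → γ N 0 = 0)
    (hsym : ∀ N : ℕ, 1 ≤ N → ∀ i : ℕ, 1 ≤ i → i ≤ q - 1 → γ N (q - i) = γ N i)
    (hrec : ∀ N : ℕ, 2 ≤ N → ∀ i : ℕ, 1 ≤ i → 2 * i ≤ q - 1 →
      γ N i = ∑ j ∈ Finset.Icc 1 i, γ (N - 1) ((q + 1) / 2 - j)) :
    ∀ N k i : ℕ, 1 ≤ i → 2 * i ≤ q - 1 →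
      (N = 2 * k + 2 → γ N i = Fcl q k i) ∧ (N = 2 * k + 1 → γ N i = Gcl q k i) :=
  gam_closed_form_general q γ hbase1 hrec
end
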